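/- arXiv:2506.03206 — 4 statements merged into one kernel-verified Lean document; each statement's English description precedes it below -/
import Mathlib

section
/- Let p, q₀ ∈ ℝ^m be probability vectors, let M ∈ ℝ^{m×m} be a row-stochastic matrix, and let p' := Mᵀq₀. Let α(p,q) := Σ_{i=1}^m min{p_i, q_i} denote the acceptance rate. Then α(p, p') ≥ α(p, q₀) − (1/2)‖Mᵀp − p‖₁; i.e., the acceptance rate of the RDK drafter is at most ε/2 below that of the TLI drafter whenever ‖Mᵀp − p‖₁ ≤ ε. -/
open Matrix

lemma min_half_aux (a b : ℝ) : min a b = (a + b - |a - b|) / 2 := by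
  rcases le_total a b with h | h
  · rw [min_eq_left h, abs_of_nonpos (by linarith)]; ring
  · rw [min_eq_right h, abs_of_nonneg (by linarith)]; ring

/-- For probability vectors `p`, `q₀` and a row-stochastic matrix `M`,
with `p' = Mᵀq₀` and acceptance rate `α(p,q) = Σ min(p i, q i)`, we have
`α(p, p') ≥ α(p, q₀) − (1/2)‖Mᵀp − p‖₁`. -/
theorem rdk_acceptance_rate_bound {m : ℕ}
    (M : Matrix (Fin m) (Fin m) ℝ)
    (hM_nonneg : ∀ i j, 0 ≤ M i j)
    (hM_rowsum : ∀ i, ∑ j, M i j = 1)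
    (p q₀ : Fin m → ℝ)
    (hp_nonneg : ∀ i, 0 ≤ p i) (hp_sum : ∑ i, p i = 1)
    (hq₀_nonneg : ∀ i, 0 ≤ q₀ i) (hq₀_sum : ∑ i, q₀ i = 1)
    (p' : Fin m → ℝ) (hp' : p' = Mᵀ *ᵥ q₀) :
    (∑ i, min (p i) (p' i)) ≥
      (∑ i, min (p i) (q₀ i)) - (1 / 2) * ∑ i, |(Mᵀ *ᵥ p) i - p i| := by
  have hp'i : ∀ i, p' i = ∑ j, M j i * q₀ j := by
    intro i; rw [hp']; simp [mulVec, dotProduct, transpose_apply]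
  have hMp : ∀ i, (Mᵀ *ᵥ p) i = ∑ j, M j i * p j := by
    intro i; simp [mulVec, dotProduct, transpose_apply]
  -- sum of p' is 1
  have hp'_sum : ∑ i, p' i = 1 := by
    simp only [hp'i]
    rw [Finset.sum_comm]
    have : ∀ j : Fin m, ∑ i, M j i * q₀ j = q₀ j := by
      intro j; rw [← Finset.sum_mul, hM_rowsum, one_mul]
    simp only [this, hq₀_sum]
  -- contraction
  have hcontr : ∑ i, |p' i - (Mᵀ *ᵥ p) i| ≤ ∑ j, |q₀ j - p j| := by
    calc ∑ i, |p' i - (Mᵀ *ᵥ p) i|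
        = ∑ i, |∑ j, M j i * (q₀ j - p j)| := by
          refine Finset.sum_congr rfl fun i _ => ?_
          rw [hp'i, hMp, ← Finset.sum_sub_distrib]
          congr 1; refine Finset.sum_congr rfl fun j _ => by ring
      _ ≤ ∑ i, ∑ j, |M j i * (q₀ j - p j)| := by
          refine Finset.sum_le_sum fun i _ => Finset.abs_sum_le_sum_abs _ _
      _ = ∑ j, ∑ i, M j i * |q₀ j - p j| := by
          rw [Finset.sum_comm]
          refine Finset.sum_congr rfl fun j _ => Finset.sum_congr rfl fun i _ => ?_
          rw [abs_mul, abs_of_nonneg (hM_nonneg j i)]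
      _ = ∑ j, |q₀ j - p j| := by
          refine Finset.sum_congr rfl fun j _ => ?_
          rw [← Finset.sum_mul, hM_rowsum, one_mul]
  -- triangle inequality termwise
  have htri : ∑ i, |p i - p' i| ≤ ∑ i, |p i - (Mᵀ *ᵥ p) i| + ∑ i, |p' i - (Mᵀ *ᵥ p) i| := by
    rw [← Finset.sum_add_distrib]
    refine Finset.sum_le_sum fun i _ => ?_
    calc |p i - p' i| = |(p i - (Mᵀ *ᵥ p) i) + ((Mᵀ *ᵥ p) i - p' i)| := by ring_nf
      _ ≤ |p i - (Mᵀ *ᵥ p) i| + |(Mᵀ *ᵥ p) i - p' i| := abs_add_le _ _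
      _ = |p i - (Mᵀ *ᵥ p) i| + |p' i - (Mᵀ *ᵥ p) i| := by rw [abs_sub_comm ((Mᵀ *ᵥ p) i)]
  -- rewrite sums of mins
  have h1 : ∑ i, min (p i) (p' i) = (1 + 1 - ∑ i, |p i - p' i|) / 2 := by
    simp only [min_half_aux, Finset.sum_div, ← Finset.sum_div]
    rw [show (∑ i, (p i + p' i - |p i - p' i|)) =
        (∑ i, p i) + (∑ i, p' i) - ∑ i, |p i - p' i| by
      rw [Finset.sum_sub_distrib, Finset.sum_add_distrib], hp_sum, hp'_sum]
  have h2 : ∑ i, min (p i) (q₀ i) = (1 + 1 - ∑ i, |p i - q₀ i|) / 2 := by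
    simp only [min_half_aux, Finset.sum_div, ← Finset.sum_div]
    rw [show (∑ i, (p i + q₀ i - |p i - q₀ i|)) =
        (∑ i, p i) + (∑ i, q₀ i) - ∑ i, |p i - q₀ i| by
      rw [Finset.sum_sub_distrib, Finset.sum_add_distrib], hp_sum, hq₀_sum]
  have habs1 : ∑ i, |p i - (Mᵀ *ᵥ p) i| = ∑ i, |(Mᵀ *ᵥ p) i - p i| := by
    refine Finset.sum_congr rfl fun i _ => abs_sub_comm _ _
  have habs2 : ∑ j, |q₀ j - p j| = ∑ j, |p j - q₀ j| := by
    refine Finset.sum_congr rfl fun j _ => abs_sub_comm _ _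
  rw [h1, h2]
  rw [habs1] at htri
  rw [habs2] at hcontr
  linarith
end

section
/- Let z ∈ ℝ^m be a vector of logits and let η ∈ ℝ^m be a noise vector with ‖η‖₁ ≤ ε. Define p := softmax(z) and q := softmax(z + η), where softmax(z)_i := exp(z_i) / Σ_{j=1}^m exp(z_j). Then ‖q − p‖₁ ≤ ε/2. -/
/-!
Along the segment `t ↦ z + t • η` the derivative of `softmax` is
`pᵢ (ηᵢ - ∑ⱼ pⱼ ηⱼ)` with `p` the current softmax vector. These terms sum to zero, so their
ℓ¹ norm is twice the sum over the indices where they are nonnegative, and for probability weights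
each such partial sum is at most `Q (1 - Q) ‖η‖₁ ≤ ‖η‖₁ / 4`, `Q` being the weight of the index set.
The ℓ¹ mean value inequality then gives `‖q - p‖₁ ≤ ‖η‖₁ / 2`.
-/

open Finset Real

theorem Finset.sum_mul_le_sum_mul_sum_abs {ι : Type*} {s : Finset ι} {w a : ι → ℝ}
    (hw : ∀ i ∈ s, 0 ≤ w i) : ∑ i ∈ s, w i * a i ≤ (∑ i ∈ s, w i) * ∑ i ∈ s, |a i| := by
  rw [Finset.mul_sum]
  refine Finset.sum_le_sum fun i hi => ?_
  calc w i * a i ≤ w i * |a i| := mul_le_mul_of_nonneg_left (le_abs_self _) (hw i hi)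
    _ ≤ (∑ j ∈ s, w j) * |a i| :=
      mul_le_mul_of_nonneg_right (Finset.single_le_sum hw hi) (abs_nonneg _)

variable {ι : Type*} [Fintype ι]

theorem sum_abs_eq_two_mul_sum_filter_nonneg {g : ι → ℝ} (hg : ∑ i, g i = 0) :
    ∑ i, |g i| = 2 * ∑ i with 0 ≤ g i, g i := by
  have hsplit := Finset.sum_filter_add_sum_filter_not univ (fun i => 0 ≤ g i) g
  have habs := Finset.sum_filter_add_sum_filter_not univ (fun i => 0 ≤ g i) (fun i => |g i|)
  rw [Finset.sum_congr rfl fun i hi => abs_of_nonneg (mem_filter.1 hi).2,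
    Finset.sum_congr rfl fun i hi => abs_of_neg (not_le.1 (mem_filter.1 hi).2),
    Finset.sum_neg_distrib] at habs
  linarith

/-- With `Q = ∑_{i ∈ s} w i`, the sum is `(1 - Q) ∑_s w a - Q ∑_{sᶜ} w a ≤ Q (1 - Q) ∑ |a|`. -/
theorem sum_mul_sub_sum_mul_le_sum_abs_div_four {w : ι → ℝ} (hw : ∀ i, 0 ≤ w i)
    (hw1 : ∑ i, w i = 1) (a : ι → ℝ) (s : Finset ι) :
    ∑ i ∈ s, w i * (a i - ∑ j, w j * a j) ≤ (∑ i, |a i|) / 4 := by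
  classical
  set Q := ∑ i ∈ s, w i
  have hQc : ∑ i ∈ sᶜ, w i = 1 - Q := by rw [← hw1, ← sum_add_sum_compl s w]; ring
  have hQ0 : 0 ≤ Q := sum_nonneg fun i _ => hw i
  have hQ1 : 0 ≤ 1 - Q := hQc ▸ sum_nonneg fun i _ => hw i
  have hin := sum_mul_le_sum_mul_sum_abs (s := s) (a := a) fun i _ => hw i
  have hout := sum_mul_le_sum_mul_sum_abs (s := sᶜ) (a := -a) fun i _ => hw i
  simp only [Pi.neg_apply, abs_neg, mul_neg, sum_neg_distrib, hQc] at hout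
  have hsum : ∑ i ∈ s, w i * (a i - ∑ j, w j * a j)
      = (1 - Q) * ∑ i ∈ s, w i * a i - Q * ∑ i ∈ sᶜ, w i * a i := by
    simp only [mul_sub, sum_sub_distrib, ← sum_mul, ← sum_add_sum_compl s (fun i => w i * a i)]
    ring
  rw [hsum, ← sum_add_sum_compl s fun i => |a i|]
  nlinarith [mul_le_mul_of_nonneg_left hin hQ1, mul_le_mul_of_nonneg_left hout hQ0,
    sq_nonneg (2 * Q - 1), sum_nonneg fun i (_ : i ∈ s) => abs_nonneg (a i),
    sum_nonneg fun i (_ : i ∈ sᶜ) => abs_nonneg (a i)]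

theorem sum_abs_mul_sub_sum_mul_le_sum_abs_div_two {w : ι → ℝ} (hw : ∀ i, 0 ≤ w i)
    (hw1 : ∑ i, w i = 1) (a : ι → ℝ) : ∑ i, |w i * (a i - ∑ j, w j * a j)| ≤ (∑ i, |a i|) / 2 := by
  have hg : ∑ i, w i * (a i - ∑ j, w j * a j) = 0 := by
    simp only [mul_sub, sum_sub_distrib, ← sum_mul, hw1, one_mul, sub_self]
  rw [sum_abs_eq_two_mul_sum_filter_nonneg hg]
  linarith [sum_mul_sub_sum_mul_le_sum_abs_div_four hw hw1 a
    {i | 0 ≤ w i * (a i - ∑ j, w j * a j)}]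

theorem sum_abs_sub_le_of_hasDerivAt {f f' : ℝ → ι → ℝ} {C a b : ℝ} (hab : a ≤ b)
    (hf : ∀ t i, HasDerivAt (fun s => f s i) (f' t i) t) (bound : ∀ t, ∑ i, |f' t i| ≤ C) :
    ∑ i, |f b i - f a i| ≤ C * (b - a) := by
  let e := PiLp.continuousLinearEquiv 1 ℝ (fun _ : ι => ℝ)
  have hF : ∀ t, HasDerivAt (fun s => e.symm (f s)) (e.symm (f' t)) t := fun t =>
    e.symm.hasFDerivAt.comp_hasDerivAt t (hasDerivAt_pi.2 (hf t))
  have := norm_image_sub_le_of_norm_deriv_le_segment' (f := fun s => e.symm (f s))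
    (fun t _ => (hF t).hasDerivWithinAt)
    (fun t _ => by simpa [PiLp.norm_eq_of_L1, e] using bound t) b ⟨hab, le_rfl⟩
  simpa [PiLp.norm_eq_of_L1, e] using this

noncomputable def softmax (z : ι → ℝ) (i : ι) : ℝ := exp (z i) / ∑ j, exp (z j)

theorem softmax_nonneg (z : ι → ℝ) (i : ι) : 0 ≤ softmax z i := by
  unfold softmax; positivity

theorem sum_softmax [Nonempty ι] (z : ι → ℝ) : ∑ i, softmax z i = 1 := by
  simp only [softmax, ← sum_div]
  exact div_self (sum_pos (fun j _ => exp_pos _) univ_nonempty).ne'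

theorem hasDerivAt_softmax {x x' : ℝ → ι → ℝ} {t : ℝ}
    (hx : ∀ i, HasDerivAt (fun s => x s i) (x' t i) t) (i : ι) :
    HasDerivAt (fun s => softmax (x s) i)
      (softmax (x t) i * (x' t i - ∑ j, softmax (x t) j * x' t j)) t := by
  have hexp : ∀ j, HasDerivAt (fun s => exp (x s j)) (exp (x t j) * x' t j) t :=
    fun j => (hx j).exp
  have hS : ∑ j, exp (x t j) ≠ 0 := (sum_pos (fun j _ => exp_pos _) ⟨i, mem_univ i⟩).ne'
  refine ((hexp i).div (HasDerivAt.fun_sum fun j _ => hexp j) hS).congr_deriv ?_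
  simp only [softmax, div_mul_eq_mul_div, ← sum_div]
  field_simp

theorem sum_abs_softmax_mul_sub_le_sum_abs_div_two (z v : ι → ℝ) :
    ∑ i, |softmax z i * (v i - ∑ j, softmax z j * v j)| ≤ (∑ i, |v i|) / 2 := by
  cases isEmpty_or_nonempty ι
  · simp
  · exact sum_abs_mul_sub_sum_mul_le_sum_abs_div_two (softmax_nonneg z) (sum_softmax z) v

/-- Softmax stability. If `‖η‖₁ ≤ ε`, `p = softmax z` and
`q = softmax (z + η)`, then `‖q − p‖₁ ≤ ε/2`. -/
theorem softmax_stability {m : ℕ}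
    (z η : Fin m → ℝ) (ε : ℝ)
    (hη : ∑ i, |η i| ≤ ε)
    (p q : Fin m → ℝ)
    (hp : ∀ i, p i = Real.exp (z i) / ∑ j, Real.exp (z j))
    (hq : ∀ i, q i = Real.exp (z i + η i) / ∑ j, Real.exp (z j + η j)) :
    ∑ i, |q i - p i| ≤ ε / 2 := by
  have hline : ∀ t i, HasDerivAt (fun s : ℝ => (z + s • η) i) (η i) t := fun t i => by
    simpa using ((hasDerivAt_id t).mul_const (η i)).const_add (z i)
  have hbound : (∑ i, |η i|) / 2 ≤ ε / 2 := by linarith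
  have := sum_abs_sub_le_of_hasDerivAt (f := fun t => softmax (z + t • η)) zero_le_one
    (fun t => hasDerivAt_softmax (x' := fun _ => η) (hline t))
    (fun t => (sum_abs_softmax_mul_sub_le_sum_abs_div_two _ η).trans hbound)
  simpa [hp, hq, softmax] using this
end

section
/- Let p ∈ ℝ^m be a probability vector and let J ∈ ℝ^{m×m} be the softmax Jacobian at p, with entries J_{ij} = p_i(δ_{ij} − p_j), where δ_{ij} is the Kronecker delta. Then for every column j, Σ_{i=1}^m |J_{ij}| = 2 p_j (1 − p_j) ≤ 1/2; consequently ‖Jv‖₁ ≤ (1/2)‖v‖₁ for every v ∈ ℝ^m. -/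
open Matrix

/-- For a probability vector `p` and the softmax Jacobian
`J i j = p i (δ_{ij} − p j)`: every column sum of absolute values equals
`2 p j (1 − p j) ≤ 1/2`, and consequently `‖Jv‖₁ ≤ (1/2)‖v‖₁` for all `v`. -/
theorem softmax_jacobian_column_sums {m : ℕ}
    (p : Fin m → ℝ)
    (hp_nonneg : ∀ i, 0 ≤ p i) (hp_sum : ∑ i, p i = 1)
    (J : Matrix (Fin m) (Fin m) ℝ)
    (hJ : ∀ i j, J i j = p i * ((if i = j then (1 : ℝ) else 0) - p j)) :
    (∀ j, (∑ i, |J i j|) = 2 * p j * (1 - p j) ∧ 2 * p j * (1 - p j) ≤ 1 / 2) ∧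
    (∀ v : Fin m → ℝ, ∑ i, |(J *ᵥ v) i| ≤ (1 / 2) * ∑ i, |v i|) := by
  have hple : ∀ j, p j ≤ 1 := by
    intro j
    calc p j ≤ ∑ i, p i := Finset.single_le_sum (fun i _ => hp_nonneg i) (Finset.mem_univ j)
    _ = 1 := hp_sum
  have hcol : ∀ j, (∑ i, |J i j|) = 2 * p j * (1 - p j) := by
    intro j
    have h1 : ∀ i, |J i j| = (if i = j then p j * (1 - p j) else p i * p j) := by
      intro i
      rw [hJ]
      by_cases h : i = j
      · subst h
        have he : ((if i = i then (1:ℝ) else 0) - p i) = 1 - p i := by simp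
        rw [he, if_pos rfl]
        exact abs_of_nonneg (mul_nonneg (hp_nonneg i) (by linarith [hple i]))
      · simp only [if_neg h]
        rw [show p i * ((0:ℝ) - p j) = -(p i * p j) by ring, abs_neg,
          abs_of_nonneg (mul_nonneg (hp_nonneg i) (hp_nonneg j))]
    rw [Finset.sum_congr rfl (fun i _ => h1 i)]
    rw [← Finset.add_sum_erase _ _ (Finset.mem_univ j), if_pos rfl]
    have h2 : ∑ i ∈ Finset.univ.erase j, (if i = j then p j * (1 - p j) else p i * p j)
        = (1 - p j) * p j := by
      rw [Finset.sum_congr rfl (fun i hi => if_neg (Finset.ne_of_mem_erase hi)),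
        ← Finset.sum_mul, Finset.sum_erase_eq_sub (Finset.mem_univ j), hp_sum]
    rw [h2]; ring
  refine ⟨fun j => ⟨hcol j, by nlinarith [sq_nonneg (2 * p j - 1)]⟩, ?_⟩
  intro v
  calc ∑ i, |(J *ᵥ v) i| ≤ ∑ i, ∑ j, |J i j * v j| := by
        apply Finset.sum_le_sum
        intro i _
        simp only [mulVec, dotProduct]
        exact Finset.abs_sum_le_sum_abs _ _
    _ = ∑ j, (∑ i, |J i j|) * |v j| := by
        rw [Finset.sum_comm]
        simp [abs_mul, Finset.sum_mul]
    _ ≤ ∑ j, (1/2) * |v j| := by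
        apply Finset.sum_le_sum
        intro j _
        apply mul_le_mul_of_nonneg_right _ (abs_nonneg _)
        rw [hcol j]
        nlinarith [sq_nonneg (2 * p j - 1)]
    _ = (1/2) * ∑ i, |v i| := by rw [Finset.mul_sum]
end

section
/- Let μ₁, μ₂ ∈ ℝ and M₁₁, M₂₂ ≥ 0 satisfy μ₁ + 3√M₁₁ ≤ μ₂ − 3√M₂₂. Let z = (z₁, z₂) ∈ ℝ² satisfy z₁ ≤ μ₁ + 3√M₁₁ and z₂ ≥ μ₂ − 3√M₂₂, and let p = softmax(z). Then p₁ − p₂ ≤ (1 − exp(μ₂ − 3√M₂₂ − μ₁ − 3√M₁₁)) / (1 + exp(μ₂ − 3√M₂₂ − μ₁ − 3√M₁₁)) ≤ 0 ≤ M₁₁; consequently M₁₁ + p₂ ≥ p₁. (Case 3 of the RDK versus TLI acceptance-rate comparison, under the 3-sigma event.) -/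
lemma f_antitone (s t : ℝ) (h : s ≤ t) :
    (1 - Real.exp t) / (1 + Real.exp t) ≤ (1 - Real.exp s) / (1 + Real.exp s) := by
  have hs : 0 < 1 + Real.exp s := by positivity
  have ht : 0 < 1 + Real.exp t := by positivity
  rw [div_le_div_iff₀ ht hs]
  nlinarith [Real.exp_le_exp.mpr h]

/-- Case 3 of the RDK vs TLI acceptance-rate comparison, under the
3-sigma event. If `μ₁ + 3√M₁₁ ≤ μ₂ − 3√M₂₂`, `z₁ ≤ μ₁ + 3√M₁₁`,
`z₂ ≥ μ₂ − 3√M₂₂`, and `p = softmax z`, then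
`p₁ − p₂ ≤ (1 − exp(μ₂ − 3√M₂₂ − μ₁ − 3√M₁₁)) / (1 + exp(μ₂ − 3√M₂₂ − μ₁ − 3√M₁₁)) ≤ 0 ≤ M₁₁`;
consequently `M₁₁ + p₂ ≥ p₁`. -/
theorem rdk_vs_tli_case3
    (μ₁ μ₂ M₁₁ M₂₂ : ℝ)
    (hM₁₁ : 0 ≤ M₁₁) (hM₂₂ : 0 ≤ M₂₂)
    (hsep : μ₁ + 3 * Real.sqrt M₁₁ ≤ μ₂ - 3 * Real.sqrt M₂₂)
    (z₁ z₂ : ℝ)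
    (hz₁ : z₁ ≤ μ₁ + 3 * Real.sqrt M₁₁)
    (hz₂ : z₂ ≥ μ₂ - 3 * Real.sqrt M₂₂)
    (p₁ p₂ : ℝ)
    (hp₁ : p₁ = Real.exp z₁ / (Real.exp z₁ + Real.exp z₂))
    (hp₂ : p₂ = Real.exp z₂ / (Real.exp z₁ + Real.exp z₂)) :
    (p₁ - p₂ ≤
        (1 - Real.exp (μ₂ - 3 * Real.sqrt M₂₂ - μ₁ - 3 * Real.sqrt M₁₁)) /
          (1 + Real.exp (μ₂ - 3 * Real.sqrt M₂₂ - μ₁ - 3 * Real.sqrt M₁₁)) ∧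
      (1 - Real.exp (μ₂ - 3 * Real.sqrt M₂₂ - μ₁ - 3 * Real.sqrt M₁₁)) /
          (1 + Real.exp (μ₂ - 3 * Real.sqrt M₂₂ - μ₁ - 3 * Real.sqrt M₁₁)) ≤ 0 ∧
      (0 : ℝ) ≤ M₁₁) ∧
    M₁₁ + p₂ ≥ p₁ := by

  have hE1 : 0 < Real.exp z₁ := Real.exp_pos _
  have hE2 : 0 < Real.exp z₂ := Real.exp_pos _
  set a := μ₂ - 3 * Real.sqrt M₂₂ - μ₁ - 3 * Real.sqrt M₁₁ with ha
  have ha0 : 0 ≤ a := by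
    have := Real.sqrt_nonneg M₁₁
    linarith
  have hdiff : z₂ - z₁ ≥ a := by
    have := Real.sqrt_nonneg M₁₁
    linarith
  have key : p₁ - p₂ = (1 - Real.exp (z₂ - z₁)) / (1 + Real.exp (z₂ - z₁)) := by
    rw [hp₁, hp₂, Real.exp_sub]
    field_simp
  have h1 : p₁ - p₂ ≤ (1 - Real.exp a) / (1 + Real.exp a) := by
    rw [key]; exact f_antitone a (z₂ - z₁) hdiff
  have h2 : (1 - Real.exp a) / (1 + Real.exp a) ≤ 0 := by
    have := f_antitone 0 a ha0
    simpa using this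
  exact ⟨⟨h1, h2, hM₁₁⟩, by linarith⟩
end
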